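/- For the 24-cell graph Γ_P with moves m_1 = {1,3,6,8,10,12,13,15}, m_2 = {2,4,5,7,9,11,14,16}, m_3 = {17,…,24} acting on states by symmetric difference, and starting state S = {1,2,4,6,12,14,15,16,17,18,19,20}, every state in the orbit {S, m_1S, m_2S, m_3S, m_1m_2S, m_1m_3S, m_2m_3S, m_1m_2m_3S} is legal: the induced subgraph of Γ_P on the state and the induced subgraph on its complement are both nonempty and connected. -/

import Mathlib

/-- The binary coordinates of the 4-cube vertex labelled `l ∈ {1, …, 16}`; the labelling is
chosen so that `{1,3,6,8,10,12,13,15}` and `{2,4,5,7,9,11,14,16}` are the two classes of the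
bipartition of the 4-cube (even/odd coordinate sum). -/
def cubeBits (l : ℕ) : ℕ := if (l - 1) % 4 ≥ 2 then (l - 1) ^^^ 1 else l - 1

/-- The 1-skeleton `Γ_P` of the 24-cell on the labels `1, …, 24`: labels `1,…,16` are the
vertices of the 4-cube (adjacent when their coordinates differ in exactly one place) and
labels `17,…,24` are the extra vertices, one for each 3-dimensional facet of the 4-cube,
each joined to the 8 vertices of its facet. -/
def GammaP : SimpleGraph ℕ :=
  SimpleGraph.fromRel (fun u v =>
    (1 ≤ u ∧ u ≤ 16 ∧ 1 ≤ v ∧ v ≤ 16 ∧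
      (cubeBits u ^^^ cubeBits v) ∈ ({1, 2, 4, 8} : Finset ℕ)) ∨
    (1 ≤ u ∧ u ≤ 16 ∧ 17 ≤ v ∧ v ≤ 24 ∧
      (cubeBits u / 2 ^ ((v - 17) / 2)) % 2 = (v - 17) % 2))

/-- A state `T ⊆ {1, …, 24}` is legal if both the subgraph of `Γ_P` induced on `T` and the
subgraph induced on its complement `{1,…,24} \ T` are nonempty and connected
(`SimpleGraph.Connected` includes nonemptiness). -/
def LegalP (T : Finset ℕ) : Prop :=
  (GammaP.induce (T : Set ℕ)).Connected ∧
  (GammaP.induce ((Finset.Icc 1 24 \ T : Finset ℕ) : Set ℕ)).Connected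

/-- The moves of the Jankiewicz–Norin–Wise admissible system on the 24-cell graph. -/
def m1 : Finset ℕ := {1, 3, 6, 8, 10, 12, 13, 15}
def m2 : Finset ℕ := {2, 4, 5, 7, 9, 11, 14, 16}
def m3 : Finset ℕ := {17, 18, 19, 20, 21, 22, 23, 24}

/-- The starting state. -/
def S0 : Finset ℕ := {1, 2, 4, 6, 12, 14, 15, 16, 17, 18, 19, 20}

/-!
Connectivity of an induced subgraph is certified by listing its vertices so that each one except
the last is adjacent to a later one: adding the vertices one at a time from the end of the list,
each new vertex attaches to the connected graph already built. Since `m₁ ∪ m₂ ∪ m₃` is the whole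
vertex set, `m₁m₂m₃` maps every state to its complement, so the eight states of the orbit form
four complementary pairs and legality of one state of a pair gives legality of the other.
-/

namespace SimpleGraph

variable {V : Type*} (G : SimpleGraph V)

def ForwardLinked : List V → Prop
  | [] => False
  | [_] => True
  | a :: b :: l => (∃ c ∈ b :: l, G.Adj a c) ∧ ForwardLinked (b :: l)

instance decidablePredForwardLinked [DecidableRel G.Adj] : DecidablePred G.ForwardLinked
  | [] => isFalse id
  | [_] => isTrue trivial
  | _ :: b :: l =>
    haveI := decidablePredForwardLinked (b :: l)
    inferInstanceAs (Decidable (_ ∧ _))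

variable {G}

theorem ForwardLinked.connected_induce :
    ∀ {l : List V}, G.ForwardLinked l → (G.induce {x | x ∈ l}).Connected
  | [], h => h.elim
  | [a], _ => by
    rw [show {x | x ∈ [a]} = {a} by ext; simp, induce_singleton_eq_top]
    exact connected_top
  | a :: b :: l, ⟨⟨c, hc, hac⟩, h⟩ => by
    have hsplit : {x | x ∈ a :: b :: l} = {a} ∪ {x | x ∈ b :: l} := by
      ext x; simp
    rw [hsplit]
    exact connected_induce_union (by simp) h.connected_induce.preconnected rfl hc hac

end SimpleGraph

open SimpleGraph

instance : DecidableRel GammaP.Adj := fun u v => by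
  unfold GammaP
  rw [fromRel_adj]
  infer_instance

theorem legalP_of_forwardLinked {T : Finset ℕ} (l₁ l₂ : List ℕ) (h₁ : l₁.toFinset = T)
    (h₂ : l₂.toFinset = Finset.Icc 1 24 \ T) (hl₁ : GammaP.ForwardLinked l₁)
    (hl₂ : GammaP.ForwardLinked l₂) : LegalP T := by
  rw [LegalP, ← h₂, ← h₁, List.coe_toFinset, List.coe_toFinset]
  exact ⟨hl₁.connected_induce, hl₂.connected_induce⟩

theorem LegalP.sdiff {T : Finset ℕ} (h : LegalP T) (hT : T ⊆ Finset.Icc 1 24) :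
    LegalP (Finset.Icc 1 24 \ T) :=
  ⟨h.2, by rw [Finset.sdiff_sdiff_eq_self hT]; exact h.1⟩

/-- For the 24-cell graph `Γ_P` with the moves `m₁, m₂, m₃` acting on
states by symmetric difference and starting state `S`, every state in the orbit
`{S, m₁S, m₂S, m₃S, m₁m₂S, m₁m₃S, m₂m₃S, m₁m₂m₃S}` is legal. -/
theorem stmt4 :
    LegalP S0 ∧
    LegalP (symmDiff m1 S0) ∧
    LegalP (symmDiff m2 S0) ∧
    LegalP (symmDiff m3 S0) ∧
    LegalP (symmDiff m1 (symmDiff m2 S0)) ∧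
    LegalP (symmDiff m1 (symmDiff m3 S0)) ∧
    LegalP (symmDiff m2 (symmDiff m3 S0)) ∧
    LegalP (symmDiff m1 (symmDiff m2 (symmDiff m3 S0))) := by
  have legal_S : LegalP S0 := legalP_of_forwardLinked
    [20, 19, 18, 17, 16, 15, 14, 12, 6, 4, 2, 1] [24, 23, 22, 21, 13, 9, 10, 11, 5, 8, 7, 3]
    (by decide) (by decide) (by decide) (by decide)
  have legal_m₁S : LegalP (symmDiff m1 S0) := legalP_of_forwardLinked
    [20, 19, 18, 17, 16, 13, 14, 10, 8, 4, 3, 2] [24, 23, 22, 21, 15, 11, 12, 9, 7, 6, 5, 1]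
    (by decide) (by decide) (by decide) (by decide)
  have legal_m₂S : LegalP (symmDiff m2 S0) := legalP_of_forwardLinked
    [20, 19, 18, 17, 15, 11, 12, 9, 7, 6, 5, 1] [24, 23, 22, 21, 16, 13, 14, 10, 8, 4, 3, 2]
    (by decide) (by decide) (by decide) (by decide)
  have legal_m₃S : LegalP (symmDiff m3 S0) := legalP_of_forwardLinked
    [24, 23, 22, 21, 16, 15, 14, 12, 6, 4, 2, 1] [20, 19, 18, 17, 13, 9, 10, 11, 5, 8, 7, 3]
    (by decide) (by decide) (by decide) (by decide)
  refine ⟨legal_S, legal_m₁S, legal_m₂S, legal_m₃S, ?_, ?_, ?_, ?_⟩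
  · convert legal_m₃S.sdiff (by decide) using 1; decide
  · convert legal_m₂S.sdiff (by decide) using 1; decide
  · convert legal_m₁S.sdiff (by decide) using 1; decide
  · convert legal_S.sdiff (by decide) using 1; decide
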